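/- For d ≥ 2, M ≥ 2 and q ∈ [0,1], define the tripartite box p(a,b,c|x,y,z) := (q·p^NL(a,b|x,y) + (1-q)·p^loc(a,b|x,y)) · [c = 0]. Then p is a tripartite no-signaling conditional probability distribution whose BKP values satisfy I_AB^{M,d}(p) = (1-q)(d-1) and I_AC^{M,d}(p) = qM(d-1) + (1-q)(d-1), and consequently (M-1)·I_AB^{M,d}(p) + I_AC^{M,d}(p) = M(d-1). -/

import Mathlib

open Finset

noncomputable section

/-- Deterministic bracket `⟨x - y⟩`: the representative in `{0,…,d-1}` of `x - y` mod `d`. -/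
def dval (d : ℕ) (x y : Fin d) : ℕ := (((x : ℕ) : ZMod d) - ((y : ℕ) : ZMod d)).val

/-- Shifted deterministic bracket `⟨x - y - 1⟩` mod `d`. -/
def dvalShift (d : ℕ) (x y : Fin d) : ℕ :=
  (((x : ℕ) : ZMod d) - ((y : ℕ) : ZMod d) - 1).val

/-- The BKP Bell expression `I^{M,d}(p) = ∑_α (⟨A_α - B_α⟩ + ⟨B_α - A_{α+1}⟩)` of a bipartite
box `p(a,b|x,y)`, with the convention `A_{M+1} = A_1 + 1`. -/
def BKP (d M : ℕ) (hM : 0 < M) (p : Fin d → Fin d → Fin M → Fin M → ℝ) : ℝ :=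
  ∑ α : Fin M,
    ((∑ a : Fin d, ∑ b : Fin d, (dval d a b : ℝ) * p a b α α) +
      if h : (α : ℕ) + 1 < M then
        ∑ a : Fin d, ∑ b : Fin d, (dval d b a : ℝ) * p a b ⟨(α : ℕ) + 1, h⟩ α
      else
        ∑ a : Fin d, ∑ b : Fin d, (dvalShift d b a : ℝ) * p a b ⟨0, hM⟩ α)

/-- No-signaling conditions for a tripartite box `p(a,b,c|x,y,z)`. -/
def NoSignalingTri (d M : ℕ)
    (p : Fin d → Fin d → Fin d → Fin M → Fin M → Fin M → ℝ) : Prop :=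
  (∀ b c x x' y z, ∑ a, p a b c x y z = ∑ a, p a b c x' y z) ∧
  (∀ a c x y y' z, ∑ b, p a b c x y z = ∑ b, p a b c x y' z) ∧
  (∀ a b x y z z', ∑ c, p a b c x y z = ∑ c, p a b c x y z')

/-- The extremal no-signaling box maximally violating the BKP Bell inequality:
`p^NL(a,b|x,x) = p^NL(a,b|x+1,x) = (1/d)·[a = b]`, `p^NL(a,b|1,M) = (1/d)·[b = a+1 mod d]`,
and `p^NL(a,b|x,y) = 1/d²` for the remaining inputs (inputs `1,…,M` are indexed by `Fin M`
starting at `0`). -/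
def pNL (d M : ℕ) : Fin d → Fin d → Fin M → Fin M → ℝ := fun a b x y =>
  if (x : ℕ) = (y : ℕ) then (if a = b then 1 / d else 0)
  else if (x : ℕ) = (y : ℕ) + 1 then (if a = b then 1 / d else 0)
  else if (x : ℕ) = 0 ∧ (y : ℕ) + 1 = M then
    (if ((b : ℕ) : ZMod d) = ((a : ℕ) : ZMod d) + 1 then 1 / d else 0)
  else 1 / (d ^ 2 : ℝ)

/-- The local deterministic box in which both parties always output `0`. -/
def pLoc (d M : ℕ) : Fin d → Fin d → Fin M → Fin M → ℝ := fun a b _ _ =>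
  (if (a : ℕ) = 0 then 1 else 0) * (if (b : ℕ) = 0 then 1 else 0)

/-- The tripartite mixture `p(a,b,c|x,y,z) = (q·p^NL + (1-q)·p^loc)(a,b|x,y)·[c = 0]`. -/
def pTri (d M : ℕ) (q : ℝ) : Fin d → Fin d → Fin d → Fin M → Fin M → Fin M → ℝ :=
  fun a b c x y _ =>
    (q * pNL d M a b x y + (1 - q) * pLoc d M a b x y) * (if (c : ℕ) = 0 then 1 else 0)

section MonogamyAux

variable {d M : ℕ}

lemma dval_self (a : Fin d) : dval d a a = 0 := by
  simp [dval]

lemma dvalShift_eq_zero {a b : Fin d}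
    (h : ((b : ℕ) : ZMod d) = ((a : ℕ) : ZMod d) + 1) : dvalShift d b a = 0 := by
  rw [dvalShift, h]
  ring_nf
  simp

lemma dvalShift_zero_zero (hd : 0 < d) : dvalShift d ⟨0, hd⟩ ⟨0, hd⟩ = d - 1 := by
  match d, hd with
  | (m+1), _ => simp [dvalShift, ZMod.val_neg_one]

lemma sum_ind (hd : 0 < d) (f : Fin d → ℝ) :
    ∑ c : Fin d, f c * (if (c : ℕ) = 0 then (1:ℝ) else 0) = f ⟨0, hd⟩ := by
  rw [Finset.sum_eq_single (⟨0, hd⟩ : Fin d)]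
  · simp
  · intro c _ hc
    have : (c : ℕ) ≠ 0 := fun h => hc (Fin.ext h)
    simp [this]
  · intro h; exact absurd (Finset.mem_univ _) h

lemma sum_ind_one (hd : 0 < d) :
    ∑ c : Fin d, (if (c : ℕ) = 0 then (1:ℝ) else 0) = 1 := by
  have := sum_ind hd (fun _ => (1:ℝ))
  simpa using this

lemma gauss (hd : 0 < d) : ∑ a : Fin d, ((a : ℕ) : ℝ) = (d : ℝ) * ((d : ℝ) - 1) / 2 := by
  have h2 : ((∑ i ∈ Finset.range d, i) * 2 : ℕ) = d * (d - 1) := Finset.sum_range_id_mul_two d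
  have h3 : (∑ i ∈ Finset.range d, (i : ℝ)) * 2 = (d : ℝ) * ((d : ℝ) - 1) := by
    have := congrArg (fun n : ℕ => (n : ℝ)) h2
    push_cast [Nat.cast_sub hd] at this
    linarith
  rw [Fin.sum_univ_eq_sum_range (fun i => ((i : ℕ) : ℝ))]
  linarith

lemma sum_val_comp (hd : 0 < d) (e : ZMod d ≃ ZMod d) :
    ∑ a : Fin d, ((e ((a : ℕ) : ZMod d)).val : ℝ) = ∑ a : Fin d, ((a : ℕ) : ℝ) := by
  haveI : NeZero d := ⟨hd.ne'⟩
  let φ : Fin d ≃ ZMod d :=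
    { toFun := fun a => ((a : ℕ) : ZMod d)
      invFun := fun z => ⟨z.val, z.val_lt⟩
      left_inv := fun a => Fin.ext (ZMod.val_cast_of_lt a.isLt)
      right_inv := fun z => ZMod.natCast_rightInverse z }
  calc ∑ a : Fin d, ((e ((a : ℕ) : ZMod d)).val : ℝ)
      = ∑ z : ZMod d, ((e z).val : ℝ) := Fintype.sum_equiv φ _ _ (fun a => rfl)
    _ = ∑ z : ZMod d, ((z.val : ℕ) : ℝ) := Fintype.sum_equiv e _ _ (fun z => rfl)
    _ = ∑ a : Fin d, ((a : ℕ) : ℝ) := by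
        refine Fintype.sum_equiv φ.symm _ _ (fun z => ?_)
        rfl

lemma sum_dval_a0 (hd : 0 < d) (h0 : (0:ℕ) < d) :
    ∑ a : Fin d, (dval d a ⟨0, h0⟩ : ℝ) = (d : ℝ) * ((d : ℝ) - 1) / 2 := by
  have := sum_val_comp hd (Equiv.subRight (((0:ℕ) : ZMod d)))
  rw [← gauss hd]
  exact this

lemma sum_dval_0a (hd : 0 < d) (h0 : (0:ℕ) < d) :
    ∑ a : Fin d, (dval d ⟨0, h0⟩ a : ℝ) = (d : ℝ) * ((d : ℝ) - 1) / 2 := by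
  have hinv : Function.Involutive (fun z : ZMod d => ((0:ℕ) : ZMod d) - z) :=
    fun z => sub_sub_cancel _ z
  have := sum_val_comp hd (Function.Involutive.toPerm _ hinv)
  rw [← gauss hd]
  exact this

lemma sum_dvalShift_0a (hd : 0 < d) (h0 : (0:ℕ) < d) :
    ∑ a : Fin d, (dvalShift d ⟨0, h0⟩ a : ℝ) = (d : ℝ) * ((d : ℝ) - 1) / 2 := by
  have hinv : Function.Involutive (fun z : ZMod d => (((0:ℕ) : ZMod d) - 1) - z) :=
    fun z => sub_sub_cancel _ z
  have h := sum_val_comp hd (Function.Involutive.toPerm _ hinv)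
  rw [← gauss hd, ← h]
  refine Finset.sum_congr rfl fun a _ => ?_
  congr 1
  simp [dvalShift, Function.Involutive.toPerm, sub_right_comm]
  congr 1
  ring




lemma cast_cond_iff (hd : 0 < d) (t : ZMod d) (b : Fin d) :
    (((b : ℕ) : ZMod d) = t) ↔ b = ⟨t.val, (haveI : NeZero d := ⟨hd.ne'⟩; t.val_lt)⟩ := by
  haveI : NeZero d := ⟨hd.ne'⟩
  constructor
  · intro h
    subst h
    exact Fin.ext (ZMod.val_cast_of_lt b.isLt).symm
  · rintro rfl
    exact ZMod.natCast_rightInverse t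

lemma sum_cast_cond (hd : 0 < d) (t : ZMod d) (v : ℝ) :
    ∑ b : Fin d, (if ((b : ℕ) : ZMod d) = t then v else 0) = v := by
  haveI : NeZero d := ⟨hd.ne'⟩
  simp only [cast_cond_iff hd t]
  rw [Finset.sum_ite_eq' Finset.univ]
  simp

lemma sum_b_pNL (hd : 2 ≤ d) (a : Fin d) (x y : Fin M) :
    ∑ b, pNL d M a b x y = 1 / (d : ℝ) := by
  have hd0 : 0 < d := by omega
  have hdne : (d : ℝ) ≠ 0 := by positivity
  unfold pNL
  by_cases h1 : (x : ℕ) = (y : ℕ)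
  · simp only [if_pos h1]
    rw [Finset.sum_ite_eq Finset.univ]; simp
  by_cases h2 : (x : ℕ) = (y : ℕ) + 1
  · simp only [if_neg h1, if_pos h2]
    rw [Finset.sum_ite_eq Finset.univ]; simp
  by_cases h3 : (x : ℕ) = 0 ∧ (y : ℕ) + 1 = M
  · simp only [if_neg h1, if_neg h2, if_pos h3]
    exact sum_cast_cond hd0 _ _
  · simp only [if_neg h1, if_neg h2, if_neg h3, Finset.sum_const, Finset.card_univ,
      Fintype.card_fin, nsmul_eq_mul]
    field_simp

lemma sum_a_pNL (hd : 2 ≤ d) (b : Fin d) (x y : Fin M) :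
    ∑ a, pNL d M a b x y = 1 / (d : ℝ) := by
  have hd0 : 0 < d := by omega
  have hdne : (d : ℝ) ≠ 0 := by positivity
  unfold pNL
  by_cases h1 : (x : ℕ) = (y : ℕ)
  · simp only [if_pos h1]
    rw [Finset.sum_ite_eq' Finset.univ]; simp
  by_cases h2 : (x : ℕ) = (y : ℕ) + 1
  · simp only [if_neg h1, if_pos h2]
    rw [Finset.sum_ite_eq' Finset.univ]; simp
  by_cases h3 : (x : ℕ) = 0 ∧ (y : ℕ) + 1 = M
  · simp only [if_neg h1, if_neg h2, if_pos h3]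
    have : ∀ a : Fin d, (if ((b : ℕ) : ZMod d) = ((a : ℕ) : ZMod d) + 1 then (1/(d:ℝ)) else 0)
        = (if ((a : ℕ) : ZMod d) = ((b : ℕ) : ZMod d) - 1 then (1/(d:ℝ)) else 0) := by
      intro a
      congr 1
      simp only [eq_iff_iff]
      constructor
      · intro h; rw [h]; ring
      · intro h; rw [h]; ring
    rw [Finset.sum_congr rfl fun a _ => this a]
    exact sum_cast_cond hd0 _ _
  · simp only [if_neg h1, if_neg h2, if_neg h3, Finset.sum_const, Finset.card_univ,
      Fintype.card_fin, nsmul_eq_mul]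
    field_simp

lemma sum_b_pLoc (hd : 0 < d) (a : Fin d) (x y : Fin M) :
    ∑ b, pLoc d M a b x y = (if (a : ℕ) = 0 then (1:ℝ) else 0) := by
  unfold pLoc
  rw [← Finset.mul_sum, sum_ind_one hd, mul_one]

lemma sum_a_pLoc (hd : 0 < d) (b : Fin d) (x y : Fin M) :
    ∑ a, pLoc d M a b x y = (if (b : ℕ) = 0 then (1:ℝ) else 0) := by
  unfold pLoc
  rw [← Finset.sum_mul, sum_ind_one hd, one_mul]

lemma sum_ite_notlast (hM : 2 ≤ M) (w : ℝ) :
    ∑ α : Fin M, (if (α : ℕ) + 1 < M then (0:ℝ) else w) = w := by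
  rw [Finset.sum_eq_single (⟨M - 1, by omega⟩ : Fin M)]
  · rw [if_neg (by show ¬(M - 1 + 1 < M); omega)]
  · intro β _ hβ
    have hne : (β : ℕ) ≠ M - 1 := fun h => hβ (Fin.ext h)
    have := β.isLt
    rw [if_pos (by omega)]
  · intro h; exact absurd (Finset.mem_univ _) h

lemma sum_ite_last (hM : 2 ≤ M) (u v : ℝ) :
    ∑ α : Fin M, (if (α : ℕ) + 1 < M then u else v) = ((M : ℝ) - 1) * u + v := by
  have h : ∀ α : Fin M, (if (α : ℕ) + 1 < M then u else v)
      = u + (if (α : ℕ) + 1 < M then (0:ℝ) else v - u) := by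
    intro α; split <;> ring
  rw [Finset.sum_congr rfl fun α _ => h α, Finset.sum_add_distrib, sum_ite_notlast hM,
    Finset.sum_const, Finset.card_univ, Fintype.card_fin, nsmul_eq_mul]
  ring


lemma BKP_add (hM : 0 < M) (p r : Fin d → Fin d → Fin M → Fin M → ℝ) :
    BKP d M hM (fun a b x y => p a b x y + r a b x y) = BKP d M hM p + BKP d M hM r := by
  unfold BKP
  rw [← Finset.sum_add_distrib]
  refine Finset.sum_congr rfl fun α _ => ?_
  by_cases h : (α : ℕ) + 1 < M
  · rw [dif_pos h, dif_pos h, dif_pos h]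
    simp only [mul_add, Finset.sum_add_distrib]
    ring
  · rw [dif_neg h, dif_neg h, dif_neg h]
    simp only [mul_add, Finset.sum_add_distrib]
    ring

lemma BKP_smul (hM : 0 < M) (t : ℝ) (p : Fin d → Fin d → Fin M → Fin M → ℝ) :
    BKP d M hM (fun a b x y => t * p a b x y) = t * BKP d M hM p := by
  unfold BKP
  rw [Finset.mul_sum]
  refine Finset.sum_congr rfl fun α _ => ?_
  rw [mul_add]
  by_cases h : (α : ℕ) + 1 < M
  · rw [dif_pos h, dif_pos h]
    simp only [Finset.mul_sum]
    refine congrArg₂ _ ?_ ?_ <;>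
      exact Finset.sum_congr rfl fun a _ => Finset.sum_congr rfl fun b _ => by ring
  · rw [dif_neg h, dif_neg h]
    simp only [Finset.mul_sum]
    refine congrArg₂ _ ?_ ?_ <;>
      exact Finset.sum_congr rfl fun a _ => Finset.sum_congr rfl fun b _ => by ring

lemma BKP_pNL (hd : 2 ≤ d) (hM : 2 ≤ M) (h1 : 0 < M) :
    BKP d M h1 (pNL d M) = 0 := by
  have hd0 : 0 < d := by omega
  unfold BKP
  refine Finset.sum_eq_zero fun α _ => ?_
  have t1 : (∑ a : Fin d, ∑ b : Fin d, (dval d a b : ℝ) * pNL d M a b α α) = 0 := by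
    refine Finset.sum_eq_zero fun a _ => Finset.sum_eq_zero fun b _ => ?_
    by_cases hab : a = b
    · subst hab
      simp [dval_self]
    · simp [pNL, hab]
  rw [t1, zero_add]
  by_cases h : (α : ℕ) + 1 < M
  · rw [dif_pos h]
    refine Finset.sum_eq_zero fun a _ => Finset.sum_eq_zero fun b _ => ?_
    have hx : ¬((α : ℕ) + 1 = (α : ℕ)) := by omega
    by_cases hab : a = b
    · subst hab
      simp [pNL, hx, dval_self]
    · simp [pNL, hx, hab]
  · rw [dif_neg h]
    have hα : (α : ℕ) + 1 = M := by have := α.isLt; omega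
    have hx1 : ¬((0:ℕ) = (α : ℕ)) := by omega
    have hx2 : ¬((0:ℕ) = (α : ℕ) + 1) := by omega
    have epNL : ∀ a b : Fin d, pNL d M a b ⟨0, h1⟩ α
        = (if ((b : ℕ) : ZMod d) = ((a : ℕ) : ZMod d) + 1 then 1 / (d : ℝ) else 0) := by
      intro a b
      unfold pNL
      rw [if_neg (show ¬(((⟨0, h1⟩ : Fin M) : ℕ) = (α : ℕ)) from hx1),
        if_neg (show ¬(((⟨0, h1⟩ : Fin M) : ℕ) = (α : ℕ) + 1) from hx2),
        if_pos (show ((⟨0, h1⟩ : Fin M) : ℕ) = 0 ∧ (α : ℕ) + 1 = M from ⟨rfl, hα⟩)]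
    refine Finset.sum_eq_zero fun a _ => Finset.sum_eq_zero fun b _ => ?_
    rw [epNL a b]
    by_cases hab : ((b : ℕ) : ZMod d) = ((a : ℕ) : ZMod d) + 1
    · simp [dvalShift_eq_zero hab]
    · simp [hab]

lemma sum_sum_loc (hd : 0 < d) (f : Fin d → Fin d → ℝ) :
    ∑ a : Fin d, ∑ b : Fin d,
      f a b * ((if (a : ℕ) = 0 then (1:ℝ) else 0) * (if (b : ℕ) = 0 then (1:ℝ) else 0))
      = f ⟨0, hd⟩ ⟨0, hd⟩ := by
  have h1 : ∀ a : Fin d, ∑ b : Fin d,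
      f a b * ((if (a : ℕ) = 0 then (1:ℝ) else 0) * (if (b : ℕ) = 0 then (1:ℝ) else 0))
      = (f a ⟨0, hd⟩ * (if (a : ℕ) = 0 then (1:ℝ) else 0)) := by
    intro a
    have := sum_ind hd (fun b => f a b * (if (a : ℕ) = 0 then (1:ℝ) else 0))
    rw [← this]
    refine Finset.sum_congr rfl fun b _ => ?_
    ring
  rw [Finset.sum_congr rfl fun a _ => h1 a]
  exact sum_ind hd _

lemma sum_sum_f_pLoc (hd : 0 < d) (f : Fin d → Fin d → ℝ) (x y : Fin M) :
    ∑ a : Fin d, ∑ b : Fin d, f a b * pLoc d M a b x y = f ⟨0, hd⟩ ⟨0, hd⟩ := by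
  unfold pLoc
  exact sum_sum_loc hd f

lemma BKP_pLoc (hd : 2 ≤ d) (hM : 2 ≤ M) (h1 : 0 < M) :
    BKP d M h1 (pLoc d M) = (d : ℝ) - 1 := by
  have hd0 : 0 < d := by omega
  unfold BKP
  have key : ∀ α : Fin M,
      ((∑ a : Fin d, ∑ b : Fin d, (dval d a b : ℝ) * pLoc d M a b α α) +
        if h : (α : ℕ) + 1 < M then
          ∑ a : Fin d, ∑ b : Fin d, (dval d b a : ℝ) * pLoc d M a b ⟨(α : ℕ) + 1, h⟩ α
        else
          ∑ a : Fin d, ∑ b : Fin d, (dvalShift d b a : ℝ) * pLoc d M a b ⟨0, h1⟩ α)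
      = (if (α : ℕ) + 1 < M then (0:ℝ) else (d : ℝ) - 1) := by
    intro α
    have t1 : (∑ a : Fin d, ∑ b : Fin d, (dval d a b : ℝ) * pLoc d M a b α α) = 0 := by
      rw [sum_sum_f_pLoc hd0 (fun a b => (dval d a b : ℝ))]
      simp [dval_self]
    rw [t1, zero_add]
    by_cases h : (α : ℕ) + 1 < M
    · rw [dif_pos h, if_pos h]
      rw [sum_sum_f_pLoc hd0 (fun a b => (dval d b a : ℝ))]
      simp [dval_self]
    · rw [dif_neg h, if_neg h]
      rw [sum_sum_f_pLoc hd0 (fun a b => (dvalShift d b a : ℝ))]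
      rw [dvalShift_zero_zero hd0]
      rw [Nat.cast_sub hd0, Nat.cast_one]
  rw [Finset.sum_congr rfl fun α _ => key α]
  exact sum_ite_notlast hM _



lemma sum_weight (hd0 : 0 < d) (q : ℝ) (g : Fin d → ℝ) :
    ∑ a : Fin d, g a * (q * (1 / (d : ℝ)) + (1 - q) * (if (a : ℕ) = 0 then (1:ℝ) else 0))
      = (q * (1 / (d : ℝ))) * (∑ a : Fin d, g a) + (1 - q) * g ⟨0, hd0⟩ := by
  simp only [mul_add, Finset.sum_add_distrib]
  congr 1
  · rw [← Finset.sum_mul]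
    ring
  · have h := sum_ind hd0 (fun a => g a * (1 - q))
    calc ∑ a : Fin d, g a * ((1 - q) * (if (a : ℕ) = 0 then (1:ℝ) else 0))
        = ∑ a : Fin d, (g a * (1 - q)) * (if (a : ℕ) = 0 then (1:ℝ) else 0) :=
          Finset.sum_congr rfl fun a _ => by ring
      _ = g ⟨0, hd0⟩ * (1 - q) := h
      _ = (1 - q) * g ⟨0, hd0⟩ := by ring

lemma BKP_mbox (hd0 : 0 < d) (hM2 : 2 ≤ M) (h1 : 0 < M) (m : Fin d → ℝ) :
    BKP d M h1 (fun a c _ _ => m a * (if (c : ℕ) = 0 then (1:ℝ) else 0))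
      = (M : ℝ) * (∑ a : Fin d, (dval d a ⟨0, hd0⟩ : ℝ) * m a)
        + (((M : ℝ) - 1) * (∑ a : Fin d, (dval d ⟨0, hd0⟩ a : ℝ) * m a)
          + (∑ a : Fin d, (dvalShift d ⟨0, hd0⟩ a : ℝ) * m a)) := by
  unfold BKP
  have key : ∀ α : Fin M,
      ((∑ a : Fin d, ∑ c : Fin d, (dval d a c : ℝ) * (m a * (if (c : ℕ) = 0 then (1:ℝ) else 0))) +
        if h : (α : ℕ) + 1 < M then
          ∑ a : Fin d, ∑ c : Fin d, (dval d c a : ℝ) * (m a * (if (c : ℕ) = 0 then (1:ℝ) else 0))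
        else
          ∑ a : Fin d, ∑ c : Fin d, (dvalShift d c a : ℝ) * (m a * (if (c : ℕ) = 0 then (1:ℝ) else 0)))
      = (∑ a : Fin d, (dval d a ⟨0, hd0⟩ : ℝ) * m a) +
        (if (α : ℕ) + 1 < M then (∑ a : Fin d, (dval d ⟨0, hd0⟩ a : ℝ) * m a)
          else (∑ a : Fin d, (dvalShift d ⟨0, hd0⟩ a : ℝ) * m a)) := by
    intro α
    refine congrArg₂ _ ?_ ?_
    · refine Finset.sum_congr rfl fun a _ => ?_
      calc ∑ c : Fin d, (dval d a c : ℝ) * (m a * (if (c : ℕ) = 0 then (1:ℝ) else 0))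
          = ∑ c : Fin d, ((dval d a c : ℝ) * m a) * (if (c : ℕ) = 0 then (1:ℝ) else 0) :=
            Finset.sum_congr rfl fun c _ => by ring
        _ = (dval d a ⟨0, hd0⟩ : ℝ) * m a := sum_ind hd0 (fun c => (dval d a c : ℝ) * m a)
    · by_cases h : (α : ℕ) + 1 < M
      · rw [dif_pos h, if_pos h]
        refine Finset.sum_congr rfl fun a _ => ?_
        calc ∑ c : Fin d, (dval d c a : ℝ) * (m a * (if (c : ℕ) = 0 then (1:ℝ) else 0))
            = ∑ c : Fin d, ((dval d c a : ℝ) * m a) * (if (c : ℕ) = 0 then (1:ℝ) else 0) :=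
              Finset.sum_congr rfl fun c _ => by ring
          _ = (dval d ⟨0, hd0⟩ a : ℝ) * m a := sum_ind hd0 (fun c => (dval d c a : ℝ) * m a)
      · rw [dif_neg h, if_neg h]
        refine Finset.sum_congr rfl fun a _ => ?_
        calc ∑ c : Fin d, (dvalShift d c a : ℝ) * (m a * (if (c : ℕ) = 0 then (1:ℝ) else 0))
            = ∑ c : Fin d, ((dvalShift d c a : ℝ) * m a) * (if (c : ℕ) = 0 then (1:ℝ) else 0) :=
              Finset.sum_congr rfl fun c _ => by ring
          _ = (dvalShift d ⟨0, hd0⟩ a : ℝ) * m a := sum_ind hd0 (fun c => (dvalShift d c a : ℝ) * m a)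
  rw [Finset.sum_congr rfl fun α _ => key α, Finset.sum_add_distrib, sum_ite_last hM2,
    Finset.sum_const, Finset.card_univ, Fintype.card_fin, nsmul_eq_mul]

lemma BKP_AC (hd : 2 ≤ d) (hM2 : 2 ≤ M) (h1 : 0 < M) (q : ℝ) :
    BKP d M h1 (fun a c _ _ =>
        (q * (1 / (d : ℝ)) + (1 - q) * (if (a : ℕ) = 0 then (1:ℝ) else 0)) *
          (if (c : ℕ) = 0 then (1:ℝ) else 0))
      = q * (M : ℝ) * ((d : ℝ) - 1) + (1 - q) * ((d : ℝ) - 1) := by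
  have hd0 : 0 < d := by omega
  have hdne : (d : ℝ) ≠ 0 := by positivity
  rw [BKP_mbox hd0 hM2 h1]
  rw [sum_weight hd0 q (fun a => (dval d a ⟨0, hd0⟩ : ℝ)),
    sum_weight hd0 q (fun a => (dval d ⟨0, hd0⟩ a : ℝ)),
    sum_weight hd0 q (fun a => (dvalShift d ⟨0, hd0⟩ a : ℝ)),
    sum_dval_a0 hd0 hd0, sum_dval_0a hd0 hd0, sum_dvalShift_0a hd0 hd0,
    dval_self, dvalShift_zero_zero hd0, Nat.cast_sub hd0, Nat.cast_one]
  push_cast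
  field_simp
  ring

lemma pNL_nonneg (hd0 : 0 < d) (a b : Fin d) (x y : Fin M) : 0 ≤ pNL d M a b x y := by
  unfold pNL
  have : (0:ℝ) < d := by positivity
  split_ifs <;> positivity

lemma pLoc_nonneg (a b : Fin d) (x y : Fin M) : 0 ≤ pLoc d M a b x y := by
  unfold pLoc
  split_ifs <;> norm_num

lemma sum_a_pTri (hd : 2 ≤ d) (q : ℝ) (b c : Fin d) (x y z : Fin M) :
    ∑ a, pTri d M q a b c x y z
      = (q * (1 / (d : ℝ)) + (1 - q) * (if (b : ℕ) = 0 then (1:ℝ) else 0)) *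
          (if (c : ℕ) = 0 then (1:ℝ) else 0) := by
  have hd0 : 0 < d := by omega
  unfold pTri
  rw [← Finset.sum_mul]
  congr 1
  rw [Finset.sum_add_distrib, ← Finset.mul_sum, ← Finset.mul_sum, sum_a_pNL hd,
    sum_a_pLoc hd0]

lemma sum_b_pTri (hd : 2 ≤ d) (q : ℝ) (a c : Fin d) (x y z : Fin M) :
    ∑ b, pTri d M q a b c x y z
      = (q * (1 / (d : ℝ)) + (1 - q) * (if (a : ℕ) = 0 then (1:ℝ) else 0)) *
          (if (c : ℕ) = 0 then (1:ℝ) else 0) := by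
  have hd0 : 0 < d := by omega
  unfold pTri
  rw [← Finset.sum_mul]
  congr 1
  rw [Finset.sum_add_distrib, ← Finset.mul_sum, ← Finset.mul_sum, sum_b_pNL hd,
    sum_b_pLoc hd0]

lemma sum_c_pTri (hd0 : 0 < d) (q : ℝ) (a b : Fin d) (x y z : Fin M) :
    ∑ c, pTri d M q a b c x y z
      = q * pNL d M a b x y + (1 - q) * pLoc d M a b x y := by
  unfold pTri
  rw [← Finset.mul_sum, sum_ind_one hd0, mul_one]



end MonogamyAux

/-- The family `pTri` is a valid tripartite no-signaling distribution which saturates the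
monogamy relation of Theorem 1 along the whole line: `I_AB = (1-q)(d-1)`,
`I_AC = qM(d-1) + (1-q)(d-1)`, hence `(M-1)I_AB + I_AC = M(d-1)`. -/
theorem pTri_saturates_monogamy (d M : ℕ) (hd : 2 ≤ d) (hM : 2 ≤ M)
    (q : ℝ) (hq0 : 0 ≤ q) (hq1 : q ≤ 1) :
    NoSignalingTri d M (pTri d M q) ∧
    (∀ a b c x y z, 0 ≤ pTri d M q a b c x y z) ∧
    (∀ x y z, ∑ a, ∑ b, ∑ c, pTri d M q a b c x y z = 1) ∧
    BKP d M (by omega) (fun a b x y => ∑ c, pTri d M q a b c x y ⟨0, by omega⟩)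
      = (1 - q) * ((d : ℝ) - 1) ∧
    BKP d M (by omega) (fun a c x z => ∑ b, pTri d M q a b c x ⟨0, by omega⟩ z)
      = q * (M : ℝ) * ((d : ℝ) - 1) + (1 - q) * ((d : ℝ) - 1) ∧
    ((M : ℝ) - 1) *
        BKP d M (by omega) (fun a b x y => ∑ c, pTri d M q a b c x y ⟨0, by omega⟩)
      + BKP d M (by omega) (fun a c x z => ∑ b, pTri d M q a b c x ⟨0, by omega⟩ z)
      = (M : ℝ) * ((d : ℝ) - 1) := by
  have hd0 : 0 < d := by omega
  have hdne : (d : ℝ) ≠ 0 := by positivity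
  have hAB : ∀ (h1 : 0 < M) (y0 : Fin M),
      BKP d M h1 (fun a b x y => ∑ c, pTri d M q a b c x y y0)
        = (1 - q) * ((d : ℝ) - 1) := by
    intro h1 y0
    have hfun : (fun a b x y => ∑ c, pTri d M q a b c x y y0)
        = fun a b x y => q * pNL d M a b x y + (1 - q) * pLoc d M a b x y := by
      funext a b x y
      exact sum_c_pTri hd0 q a b x y y0
    rw [hfun, BKP_add h1, BKP_smul h1, BKP_smul h1, BKP_pNL hd hM h1, BKP_pLoc hd hM h1]
    ring
  have hAC : ∀ (h1 : 0 < M) (y0 : Fin M),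
      BKP d M h1 (fun a c x z => ∑ b, pTri d M q a b c x y0 z)
        = q * (M : ℝ) * ((d : ℝ) - 1) + (1 - q) * ((d : ℝ) - 1) := by
    intro h1 y0
    have hfun : (fun a c x z => ∑ b, pTri d M q a b c x y0 z)
        = fun (a c : Fin d) (_ _ : Fin M) => (q * (1 / (d : ℝ)) + (1 - q) * (if (a : ℕ) = 0 then (1:ℝ) else 0)) *
            (if (c : ℕ) = 0 then (1:ℝ) else 0) := by
      funext a c x z
      exact sum_b_pTri hd q a c x y0 z
    rw [hfun]
    exact BKP_AC hd hM h1 q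
  refine ⟨⟨?_, ?_, ?_⟩, ?_, ?_, ?_, ?_, ?_⟩
  · intro b c x x' y z
    rw [sum_a_pTri hd, sum_a_pTri hd]
  · intro a c x y y' z
    rw [sum_b_pTri hd, sum_b_pTri hd]
  · intro a b x y z z'
    rfl
  · intro a b c x y z
    unfold pTri
    refine mul_nonneg (add_nonneg (mul_nonneg hq0 (pNL_nonneg hd0 a b x y))
      (mul_nonneg (by linarith) (pLoc_nonneg a b x y))) ?_
    split <;> norm_num
  · intro x y z
    calc ∑ a, ∑ b, ∑ c, pTri d M q a b c x y z
        = ∑ a : Fin d, ∑ b : Fin d, (q * pNL d M a b x y + (1 - q) * pLoc d M a b x y) :=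
          Finset.sum_congr rfl fun a _ => Finset.sum_congr rfl fun b _ =>
            sum_c_pTri hd0 q a b x y z
      _ = ∑ a : Fin d, (q * (1 / (d : ℝ)) + (1 - q) * (if (a : ℕ) = 0 then (1:ℝ) else 0)) := by
          refine Finset.sum_congr rfl fun a _ => ?_
          rw [Finset.sum_add_distrib, ← Finset.mul_sum, ← Finset.mul_sum, sum_b_pNL hd,
            sum_b_pLoc hd0]
      _ = 1 := by
          rw [Finset.sum_add_distrib, Finset.sum_const, ← Finset.mul_sum, sum_ind_one hd0,
            Finset.card_univ, Fintype.card_fin, nsmul_eq_mul]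
          field_simp
          ring
  · exact hAB _ _
  · exact hAC _ _
  · rw [hAB _ _, hAC _ _]
    ring
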